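/- arXiv:1901.06702 — 3 statements merged into one kernel-verified Lean document; each statement's English description precedes it below -/
import Mathlib

section
/- Let m ≥ 2, d ≥ 1, set A_m = min(m·2^m, d) and M_m = {1/2^m,...,(2^m-1)/2^m}. Suppose P ⊆ M_m^d is a point set such that for every A ⊆ {1,...,d} with #A = A_m and every z ∈ M_m^{A_m}, there exists x ∈ P with x|_A = z. Then the dispersion of P is at most 2^{-m}, i.e., every axis-parallel box B ⊆ [0,1]^d with B ∩ P = ∅ has volume at most 2^{-m}. -/
/-!
Suppose an empty box `B = ∏ I_j` had volume `> ε = 2^{-m}`. Then every side is longer than `ε`,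
so each `I_j` contains a grid point. A coordinate `j` is active when `I_j` misses some grid point;
such a side avoids a point of `[ε, 1 - ε]` and so has length at most `1 - ε`. Since
`(1 - ε)^{m 2^m} ≤ e^{-m} ≤ ε`, fewer than `m 2^m` coordinates are active. Prescribing grid points
inside `I_j` on a set of `A_m` coordinates containing the active ones yields a point of `P` in `B`.
-/

/-- The grid `M_m = {i/2^m : 1 ≤ i ≤ 2^m - 1} ⊆ (0,1)`. -/
def Mgrid (m : ℕ) : Set ℝ := {x | ∃ i : ℕ, 1 ≤ i ∧ i ≤ 2 ^ m - 1 ∧ x = (i : ℝ) / 2 ^ m}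

open Finset Set

lemma Mgrid_subset_Icc (m : ℕ) : Mgrid m ⊆ Icc ((2 ^ m : ℝ)⁻¹) (1 - (2 ^ m : ℝ)⁻¹) := by
  rintro _ ⟨i, hi1, hi2, rfl⟩
  have hpow : (0 : ℝ) < 2 ^ m := by positivity
  have hi : (i : ℝ) + 1 ≤ 2 ^ m := by exact_mod_cast (by omega : i + 1 ≤ 2 ^ m)
  constructor
  · rw [inv_eq_one_div, div_le_div_iff_of_pos_right hpow]
    exact_mod_cast hi1
  · rw [div_le_iff₀ hpow, sub_mul, inv_mul_cancel₀ hpow.ne']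
    linarith

lemma exists_mem_Mgrid_Ioo {m : ℕ} {a b : ℝ} (ha : 0 ≤ a) (hb : b ≤ 1)
    (hlen : (2 ^ m : ℝ)⁻¹ < b - a) : ∃ y ∈ Mgrid m, y ∈ Ioo a b := by
  have hpow : (0 : ℝ) < 2 ^ m := by positivity
  have hlen' : 1 < 2 ^ m * b - 2 ^ m * a := by
    rw [← mul_sub, ← inv_lt_iff_one_lt_mul₀' hpow]
    exact hlen
  set i := ⌊(2 : ℝ) ^ m * a⌋₊ + 1
  have hai : (2 : ℝ) ^ m * a < i := by
    simpa only [i, Nat.cast_add, Nat.cast_one] using Nat.lt_floor_add_one ((2 : ℝ) ^ m * a)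
  have hib : (i : ℝ) < 2 ^ m * b := by
    have := Nat.floor_le (mul_nonneg hpow.le ha)
    push_cast [i]
    linarith
  have hi : i < 2 ^ m := by
    have : (i : ℝ) < 2 ^ m := by nlinarith
    exact_mod_cast this
  refine ⟨i / 2 ^ m, ⟨i, by omega, by omega, rfl⟩, ?_, ?_⟩
  · rw [lt_div_iff₀ hpow, mul_comm]
    exact hai
  · rw [div_lt_iff₀ hpow, mul_comm]
    exact hib

lemma sub_le_of_not_Mgrid_subset_Ioo {m : ℕ} {a b : ℝ} (ha : 0 ≤ a) (hb : b ≤ 1)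
    (h : ¬ Mgrid m ⊆ Ioo a b) : b - a ≤ 1 - (2 ^ m : ℝ)⁻¹ := by
  obtain ⟨y, hy, hyI⟩ := Set.not_subset.1 h
  obtain ⟨hy0, hy1⟩ := Mgrid_subset_Icc m hy
  rw [Set.mem_Ioo, not_and_or, not_lt, not_lt] at hyI
  rcases hyI with hya | hby <;> linarith

lemma one_sub_inv_two_pow_pow_le (m : ℕ) :
    (1 - (2 ^ m : ℝ)⁻¹) ^ (m * 2 ^ m) ≤ (2 ^ m : ℝ)⁻¹ := by
  have hbase : (1 - (2 ^ m : ℝ)⁻¹) ^ (2 ^ m) ≤ Real.exp (-1) := by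
    have := Real.one_sub_div_pow_le_exp_neg (n := 2 ^ m) (t := 1)
      (by exact_mod_cast Nat.one_le_two_pow)
    simpa only [Nat.cast_pow, Nat.cast_ofNat, one_div] using this
  have hnonneg : 0 ≤ 1 - (2 ^ m : ℝ)⁻¹ :=
    sub_nonneg.2 (inv_le_one_of_one_le₀ (one_le_pow₀ one_le_two))
  calc (1 - (2 ^ m : ℝ)⁻¹) ^ (m * 2 ^ m) = ((1 - (2 ^ m : ℝ)⁻¹) ^ (2 ^ m)) ^ m := by
        rw [mul_comm, pow_mul]
    _ ≤ (1 / 2) ^ m :=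
        pow_le_pow_left₀ (pow_nonneg hnonneg _) (hbase.trans Real.exp_neg_one_lt_half.le) m
    _ = (2 ^ m : ℝ)⁻¹ := by rw [one_div, inv_pow]

lemma prod_le_pow_card_of_le {ι : Type*} [Fintype ι] {s : ι → ℝ} (h0 : ∀ j, 0 ≤ s j)
    (h1 : ∀ j, s j ≤ 1) {A : Finset ι} {c : ℝ} (hA : ∀ j ∈ A, s j ≤ c) :
    ∏ j, s j ≤ c ^ #A :=
  calc ∏ j, s j ≤ ∏ j ∈ A, s j :=
        prod_le_prod_of_subset_of_le_one A.subset_univ (fun j _ => h0 j) (fun j _ _ => h1 j)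
    _ ≤ ∏ _j ∈ A, c := prod_le_prod (fun j _ => h0 j) hA
    _ = c ^ #A := prod_const c

section Box

variable {ι : Type*} [Fintype ι] {m : ℕ} {a b : ι → ℝ}

open Classical in
noncomputable def activeCoords (m : ℕ) (a b : ι → ℝ) : Finset ι :=
  {j | ¬ Mgrid m ⊆ Ioo (a j) (b j)}

lemma mem_activeCoords {j : ι} : j ∈ activeCoords m a b ↔ ¬ Mgrid m ⊆ Ioo (a j) (b j) := by
  simp [activeCoords]

lemma inv_two_pow_lt_sub_of_lt_prod (hab : ∀ j, 0 ≤ a j ∧ a j ≤ b j ∧ b j ≤ 1)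
    (hvol : (2 ^ m : ℝ)⁻¹ < ∏ j, (b j - a j)) (j : ι) : (2 ^ m : ℝ)⁻¹ < b j - a j := by
  have := prod_le_pow_card_of_le (s := fun k => b k - a k) (A := {j}) (c := b j - a j)
    (fun k => by linarith [hab k]) (fun k => by linarith [hab k])
    (fun k hk => (mem_singleton.1 hk).symm ▸ le_rfl)
  rw [Finset.card_singleton, pow_one] at this
  exact hvol.trans_le this

lemma card_activeCoords_lt (hab : ∀ j, 0 ≤ a j ∧ a j ≤ b j ∧ b j ≤ 1)
    (hvol : (2 ^ m : ℝ)⁻¹ < ∏ j, (b j - a j)) :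
    #(activeCoords m a b) < m * 2 ^ m := by
  by_contra! hcard
  have hle := prod_le_pow_card_of_le (s := fun j => b j - a j)
    (A := activeCoords m a b) (c := 1 - (2 ^ m : ℝ)⁻¹)
    (fun j => by linarith [hab j]) (fun j => by linarith [hab j])
    (fun j hj => sub_le_of_not_Mgrid_subset_Ioo (hab j).1 (hab j).2.2 (mem_activeCoords.1 hj))
  have hc0 : 0 ≤ 1 - (2 ^ m : ℝ)⁻¹ :=
    sub_nonneg.2 (inv_le_one_of_one_le₀ (one_le_pow₀ one_le_two))
  have := (pow_le_pow_of_le_one hc0 (by simp) hcard).trans (one_sub_inv_two_pow_pow_le m)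
  linarith

end Box

theorem stmt_9_general (m d : ℕ)
    (P : Finset (Fin d → ℝ)) (hP : ∀ x ∈ P, ∀ j, x j ∈ Mgrid m)
    (hcond : ∀ A : Finset (Fin d), A.card = min (m * 2 ^ m) d →
      ∀ z : Fin d → ℝ, (∀ j, z j ∈ Mgrid m) → ∃ x ∈ P, ∀ j ∈ A, x j = z j) :
    ∀ (a b : Fin d → ℝ) (I : Fin d → Set ℝ),
      (∀ j, 0 ≤ a j ∧ a j ≤ b j ∧ b j ≤ 1) →
      (∀ j, Set.Ioo (a j) (b j) ⊆ I j ∧ I j ⊆ Set.Icc (a j) (b j)) →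
      (∀ x ∈ P, ∃ j, x j ∉ I j) →
      ∏ j, (b j - a j) ≤ ((2 : ℝ) ^ m)⁻¹ := by
  intro a b I hab hI hdisj
  by_contra! hvol
  choose z hzM hzI using fun j =>
    exists_mem_Mgrid_Ioo (hab j).1 (hab j).2.2 (inv_two_pow_lt_sub_of_lt_prod hab hvol j)
  have hactive : #(activeCoords m a b) ≤ min (m * 2 ^ m) d :=
    le_min (card_activeCoords_lt hab hvol).le (card_le_univ _ |>.trans_eq (by simp))
  obtain ⟨A, hsub, hA⟩ := exists_superset_card_eq hactive (by simp)
  obtain ⟨x, hxP, hxz⟩ := hcond A hA z hzM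
  obtain ⟨j, hj⟩ := hdisj x hxP
  refine hj ((hI j).1 ?_)
  by_cases hjA : j ∈ A
  · exact hxz j hjA ▸ hzI j
  · have hinactive : Mgrid m ⊆ Ioo (a j) (b j) :=
      not_not.1 fun hact => hjA (hsub (mem_activeCoords.2 hact))
    exact hinactive (hP x hxP j)

/-- If `P ⊆ M_m^d` hits every configuration prescribed on every index set of cardinality
`A_m = min(m·2^m, d)`, then every axis-parallel box `B = I_1 × ⋯ × I_d ⊆ [0,1]^d`
disjoint from `P` has volume at most `2^{-m}`, i.e. `disp(P) ≤ 2^{-m}`. -/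
theorem stmt_9 (m d : ℕ) (hm : 2 ≤ m) (hd : 1 ≤ d)
    (P : Finset (Fin d → ℝ)) (hP : ∀ x ∈ P, ∀ j, x j ∈ Mgrid m)
    (hcond : ∀ A : Finset (Fin d), A.card = min (m * 2 ^ m) d →
      ∀ z : Fin d → ℝ, (∀ j, z j ∈ Mgrid m) → ∃ x ∈ P, ∀ j ∈ A, x j = z j) :
    ∀ (a b : Fin d → ℝ) (I : Fin d → Set ℝ),
      (∀ j, 0 ≤ a j ∧ a j ≤ b j ∧ b j ≤ 1) →
      (∀ j, Set.Ioo (a j) (b j) ⊆ I j ∧ I j ⊆ Set.Icc (a j) (b j)) →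
      (∀ x ∈ P, ∃ j, x j ∉ I j) →
      ∏ j, (b j - a j) ≤ ((2 : ℝ) ^ m)⁻¹ :=
  stmt_9_general m d P hP hcond
end

section
/- For every natural number d ≥ 2 and every ε ∈ (0, 1/2), there exists a point set P ⊆ [0,1]^d with disp(P) ≤ ε and #P ≤ 2^7 · log₂(d) · (1 + log₂(ε^{-1}))² / ε². -/
/-!
Work on the grid `{(k + 1) / (N + 1) : k < N} ^ d` with `N ≈ 4 log ε⁻¹ + 2 log₂ ε⁻¹ / ε`.
A box `∏ (a j, b j)` of volume `> ε` contains the grid sub-box obtained by discarding, in each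
direction, the grid points `≤ a j` and those `≥ b j`. With `L j = b j - a j`, the numbers of
discarded points sum to at most `(N + 1) ∑ (1 - L j) ≤ (N + 1) log ε⁻¹ ≤ Λ`, and the sub-box
keeps an `ε / 2` fraction of the grid, because at most `log₂ ε⁻¹` sides are shorter than `1 / 2`.
Such sub-boxes are described by words of length `Λ` over `2 d + 1` letters, so by a union bound
some `n ≈ (2 / ε) Λ log (2 d + 1)` grid points meet all of the dense ones, and this `n` is within
the stated bound.
-/

open Finset Real

theorem one_sub_sum_le_prod_one_sub {ι : Type*} (s : Finset ι) {f : ι → ℝ}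
    (h0 : ∀ i ∈ s, 0 ≤ f i) (h1 : ∀ i ∈ s, f i ≤ 1) :
    1 - ∑ i ∈ s, f i ≤ ∏ i ∈ s, (1 - f i) := by
  induction s using Finset.cons_induction with
  | empty => simp
  | cons a s ha ih =>
    rw [sum_cons, prod_cons]
    have ha0 := h0 a (mem_cons_self a s)
    have ha1 := h1 a (mem_cons_self a s)
    have ih := ih (fun i hi => h0 i (mem_cons_of_mem hi))
      (fun i hi => h1 i (mem_cons_of_mem hi))
    have hs : 0 ≤ ∑ i ∈ s, f i := sum_nonneg fun i hi => h0 i (mem_cons_of_mem hi)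
    nlinarith [mul_le_mul_of_nonneg_left ih (sub_nonneg.2 ha1)]

theorem exists_forall_exists_apply_mem {X : Type*} [Fintype X] [Nonempty X]
    (𝒮 : Finset (Finset X)) {δ : ℝ} {n : ℕ}
    (h𝒮 : ∀ S ∈ 𝒮, δ * Fintype.card X ≤ #S) (hn : #𝒮 * (1 - δ) ^ n < 1) :
    ∃ ω : Fin n → X, ∀ S ∈ 𝒮, ∃ i, ω i ∈ S := by
  classical
  set bad := 𝒮.biUnion fun S => Fintype.piFinset fun _ : Fin n => Sᶜ
  have hmissing : ∀ S ∈ 𝒮,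
      (#(Fintype.piFinset fun _ : Fin n => Sᶜ) : ℝ) ≤ ((1 - δ) * Fintype.card X) ^ n := by
    intro S hS
    have hcompl : (#Sᶜ : ℝ) = Fintype.card X - #S := by
      rw [card_compl, Nat.cast_sub (card_le_univ S)]
    rw [Fintype.card_piFinset_const, Nat.cast_pow]
    exact pow_le_pow_left₀ (Nat.cast_nonneg _) (by linarith [h𝒮 S hS]) n
  have hbad : (#bad : ℝ) < #(univ : Finset (Fin n → X)) := calc
    (#bad : ℝ) ≤ ∑ S ∈ 𝒮, (#(Fintype.piFinset fun _ : Fin n => Sᶜ) : ℝ) := by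
      exact_mod_cast card_biUnion_le
    _ ≤ #𝒮 * ((1 - δ) * Fintype.card X) ^ n := by
      simpa using sum_le_sum hmissing
    _ = (#𝒮 * (1 - δ) ^ n) * (Fintype.card X : ℝ) ^ n := by rw [mul_pow]; ring
    _ < (Fintype.card X : ℝ) ^ n := mul_lt_of_lt_one_left (by positivity) hn
    _ = #(univ : Finset (Fin n → X)) := by simp
  obtain ⟨ω, -, hω⟩ := exists_mem_notMem_of_card_lt_card (by exact_mod_cast hbad)
  refine ⟨ω, fun S hS => ?_⟩
  by_contra! h
  exact hω (mem_biUnion.2 ⟨S, hS, Fintype.mem_piFinset.2 fun i => mem_compl.2 (h i)⟩)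

theorem pow_mul_one_sub_pow_lt_one {x δ : ℝ} {Λ n : ℕ} (hx : 0 < x) (hδ : δ ≤ 1)
    (h : Λ * log x < δ * n) : x ^ Λ * (1 - δ) ^ n < 1 := calc
  x ^ Λ * (1 - δ) ^ n ≤ exp (log x) ^ Λ * exp (-δ) ^ n := by
    rw [exp_log hx]
    gcongr
    exact one_sub_le_exp_neg δ
  _ = exp (Λ * log x - δ * n) := by
    rw [← exp_nat_mul, ← exp_nat_mul, ← exp_add]; ring_nf
  _ < 1 := exp_lt_one_iff.2 (by linarith)

theorem exists_fin_fiber_card_eq {α : Type*} [Fintype α] [DecidableEq α] (z : α → ℕ)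
    {Λ : ℕ} (h : ∑ a, z a ≤ Λ) : ∃ c : Fin Λ → Option α, ∀ a, #{i | c i = some a} = z a := by
  let w : Option α → ℕ := fun o => o.elim (Λ - ∑ a, z a) z
  have hw : Fintype.card (Σ o, Fin (w o)) = Λ := by
    simp only [Fintype.card_sigma, Fintype.card_fin, Fintype.sum_option]
    simp only [w, Option.elim]
    omega
  let e := (Fintype.equivFinOfCardEq hw).symm
  refine ⟨fun i => (e i).1, fun a => ?_⟩
  calc #{i | (e i).1 = some a} = #(({some a} : Finset (Option α)).sigma fun o => univ) :=
        card_equiv e fun i => by simp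
    _ = z a := by simp [w]

section VolumeBounds

variable {ι : Type*} [Fintype ι] {L : ι → ℝ} {ε : ℝ}

theorem card_lt_half_le_logb_inv (hL0 : ∀ j, 0 ≤ L j) (hL1 : ∀ j, L j ≤ 1) (hε : 0 < ε)
    (hεL : ε ≤ ∏ j, L j) : (#{j | L j < 1 / 2} : ℝ) ≤ logb 2 ε⁻¹ := by
  set k := #{j | L j < 1 / 2}
  have hεk : ε ≤ (2 ^ k)⁻¹ := calc
    ε ≤ ∏ j, L j := hεL
    _ ≤ ∏ j ∈ {j | L j < 1 / 2}, L j :=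
      prod_le_prod_of_subset_of_le_one (subset_univ _) (fun j _ => hL0 j) fun j _ _ => hL1 j
    _ ≤ ∏ _j ∈ {j | L j < 1 / 2}, (1 / 2 : ℝ) :=
      prod_le_prod (fun j _ => hL0 j) fun j hj => (mem_filter.1 hj).2.le
    _ = (2 ^ k)⁻¹ := by rw [prod_const, div_pow, one_pow, one_div (2 ^ k : ℝ)]
  rw [le_logb_iff_rpow_le one_lt_two (inv_pos.2 hε), rpow_natCast]
  exact (le_inv_comm₀ hε (by positivity)).1 hεk

theorem sum_one_sub_le_log_inv (hL0 : ∀ j, 0 < L j) (hε : 0 < ε) (hεL : ε ≤ ∏ j, L j) :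
    ∑ j, (1 - L j) ≤ log ε⁻¹ := calc
  ∑ j, (1 - L j) ≤ ∑ j, -log (L j) :=
    sum_le_sum fun j _ => by linarith [log_le_sub_one_of_pos (hL0 j)]
  _ = -log (∏ j, L j) := by rw [log_prod fun j _ => (hL0 j).ne', sum_neg_distrib]
  _ ≤ log ε⁻¹ := by rw [log_inv]; exact neg_le_neg (log_le_log hε hεL)

/-- Coordinates with `L j ≥ 1/2` contribute at most `2 (1 - L j)`, and there are at most
`log₂ ε⁻¹` others, each contributing less than `1 / L j ≤ ε⁻¹`. -/
theorem sum_one_sub_div_le (hL0 : ∀ j, 0 < L j) (hL1 : ∀ j, L j ≤ 1) (hε : 0 < ε)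
    (hεL : ε ≤ ∏ j, L j) :
    ∑ j, (1 - L j) / L j ≤ 2 * log ε⁻¹ + logb 2 ε⁻¹ / ε := by
  have hterm : ∀ j, (1 - L j) / L j ≤ 2 * (1 - L j) + if L j < 1 / 2 then ε⁻¹ else 0 := by
    intro j
    have hεj : ε ≤ L j := hεL.trans <| by
      simpa using prod_le_prod_of_subset_of_le_one (subset_univ {j}) (fun j _ => (hL0 j).le)
        fun j _ _ => hL1 j
    rw [div_le_iff₀ (hL0 j)]
    split_ifs with h
    · have hLε : 1 ≤ L j / ε := (one_le_div hε).2 hεj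
      rw [add_mul, inv_mul_eq_div]
      nlinarith [hL1 j, hL0 j]
    · nlinarith [hL1 j]
  calc ∑ j, (1 - L j) / L j ≤ ∑ j, (2 * (1 - L j) + if L j < 1 / 2 then ε⁻¹ else 0) :=
        sum_le_sum fun j _ => hterm j
    _ = 2 * ∑ j, (1 - L j) + #{j | L j < 1 / 2} * ε⁻¹ := by
      rw [sum_add_distrib, ← mul_sum, ← sum_filter, sum_const, nsmul_eq_mul]
    _ ≤ 2 * log ε⁻¹ + logb 2 ε⁻¹ * ε⁻¹ := by
      gcongr
      · exact sum_one_sub_le_log_inv hL0 hε hεL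
      · exact card_lt_half_le_logb_inv (fun j => (hL0 j).le) hL1 hε hεL
    _ = 2 * log ε⁻¹ + logb 2 ε⁻¹ / ε := by rw [div_eq_mul_inv]

theorem one_sub_div_mul_le_prod (hL0 : ∀ j, 0 < L j) (hL1 : ∀ j, L j ≤ 1) {N : ℝ}
    (hN : 0 < N) (hLN : ∑ j, (1 - L j) / L j ≤ N) {c : ι → ℝ} (hc : ∀ j, L j * (N + 1) - 1 ≤ c j) :
    (1 - (∑ j, (1 - L j) / L j) / N) * (∏ j, L j) * N ^ Fintype.card ι ≤ ∏ j, c j := by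
  set u : ι → ℝ := fun j => (1 - L j) / L j / N
  have hterm0 : ∀ j, 0 ≤ (1 - L j) / L j := fun j => div_nonneg (sub_nonneg.2 (hL1 j)) (hL0 j).le
  have hu0 : ∀ j, 0 ≤ u j := fun j => div_nonneg (hterm0 j) hN.le
  have hu1 : ∀ j, u j ≤ 1 := fun j =>
    div_le_one_of_le₀ ((single_le_sum (fun i _ => hterm0 i) (mem_univ j)).trans hLN) hN.le
  have hfactor : ∀ j, L j * (N + 1) - 1 = N * L j * (1 - u j) := fun j => by
    have := (hL0 j).ne'
    simp only [u]
    field_simp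
    ring
  calc (1 - (∑ j, (1 - L j) / L j) / N) * (∏ j, L j) * N ^ Fintype.card ι
      = (1 - ∑ j, u j) * ∏ j, (N * L j) := by
        rw [← sum_div, prod_mul_distrib, prod_const, card_univ]; ring
    _ ≤ (∏ j, (1 - u j)) * ∏ j, (N * L j) := by
        gcongr
        · exact prod_nonneg fun j _ => (mul_pos hN (hL0 j)).le
        · exact one_sub_sum_le_prod_one_sub _ (fun j _ => hu0 j) fun j _ => hu1 j
    _ = ∏ j, (L j * (N + 1) - 1) := by
        rw [← prod_mul_distrib]; exact prod_congr rfl fun j _ => by rw [hfactor]; ring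
    _ ≤ ∏ j, c j := prod_le_prod (fun j _ => by
        rw [hfactor]; exact mul_nonneg (mul_pos hN (hL0 j)).le (sub_nonneg.2 (hu1 j)))
        fun j _ => hc j

end VolumeBounds

noncomputable section Grid

variable {d N : ℕ}

def gridPoint (N : ℕ) (p : Fin d → Fin N) : Fin d → ℝ := fun j => ((p j : ℕ) + 1) / (N + 1)

def gridBox (N : ℕ) (x y : Fin d → ℕ) : Finset (Fin d → Fin N) :=
  Fintype.piFinset fun j => {p : Fin N | x j ≤ p ∧ p + y j < N}

/-- For `0 ≤ a < 1`, the number of grid points `(k + 1) / (N + 1)`, `k < N`, that are `≤ a`;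
`upperGap N b` is, for `0 < b ≤ 1`, the number of those that are `≥ b`. -/
def lowerGap (N : ℕ) (a : ℝ) : ℕ := ⌊a * (N + 1)⌋₊

def upperGap (N : ℕ) (b : ℝ) : ℕ := N + 1 - ⌈b * (N + 1)⌉₊

theorem gridPoint_mem_Icc (p : Fin d → Fin N) (j : Fin d) :
    gridPoint N p j ∈ Set.Icc 0 1 := by
  refine ⟨by unfold gridPoint; positivity, div_le_one_of_le₀ ?_ (by positivity)⟩
  exact_mod_cast Nat.succ_le_succ (p j).isLt.le

theorem card_filter_le_and_add_lt (N x y : ℕ) :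
    #{p : Fin N | x ≤ (p : ℕ) ∧ (p : ℕ) + y < N} = N - (x + y) := by
  rw [← card_map Fin.valEmbedding, show N - (x + y) = N - y - x by omega, ← Nat.card_Ico]
  congr 1
  ext m
  simp only [mem_map, mem_filter, mem_univ, true_and, Fin.valEmbedding_apply, mem_Ico]
  constructor
  · rintro ⟨p, hp, rfl⟩
    omega
  · intro hm
    exact ⟨⟨m, by omega⟩, by simp only; omega, rfl⟩

theorem card_gridBox (x y : Fin d → ℕ) : #(gridBox N x y) = ∏ j, (N - (x j + y j)) := by
  simp only [gridBox, Fintype.card_piFinset, card_filter_le_and_add_lt]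

theorem gridPoint_mem_Ioo {a b : ℝ} (hb : b ≤ 1) {p : Fin d → Fin N} {j : Fin d}
    (hlow : lowerGap N a ≤ p j) (hup : p j + upperGap N b < N) :
    gridPoint N p j ∈ Set.Ioo a b := by
  have hN : (0 : ℝ) < N + 1 := by positivity
  have hceil : ⌈b * (N + 1)⌉₊ ≤ N + 1 := Nat.ceil_le.2 (by push_cast; nlinarith)
  rw [gridPoint, Set.mem_Ioo, lt_div_iff₀ hN, div_lt_iff₀ hN]
  constructor
  · calc a * (N + 1) < lowerGap N a + 1 := Nat.lt_floor_add_one _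
      _ ≤ (p j : ℕ) + 1 := by gcongr
  · have : (p j : ℕ) + 1 < ⌈b * (N + 1)⌉₊ := by unfold upperGap at hup; omega
    exact_mod_cast Nat.lt_ceil.1 this

theorem lowerGap_add_upperGap_le {a b : ℝ} (ha : 0 ≤ a) (hb : b ≤ 1) :
    (lowerGap N a + upperGap N b : ℝ) ≤ (1 - (b - a)) * (N + 1) := by
  have hceil : ⌈b * (N + 1)⌉₊ ≤ N + 1 := Nat.ceil_le.2 (by push_cast; nlinarith)
  have hlow : (lowerGap N a : ℝ) ≤ a * (N + 1) := Nat.floor_le (by positivity)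
  have hup : (upperGap N b : ℝ) ≤ (1 - b) * (N + 1) := by
    rw [upperGap, Nat.cast_sub hceil]
    push_cast
    linarith [Nat.le_ceil (b * (N + 1))]
  linarith

theorem mul_sub_one_le_sub_gaps {a b : ℝ} (ha : 0 ≤ a) (hb : b ≤ 1) :
    (b - a) * (N + 1) - 1 ≤ ((N - (lowerGap N a + upperGap N b) : ℕ) : ℝ) := calc
  (b - a) * (N + 1) - 1 ≤ (N : ℝ) - (lowerGap N a + upperGap N b : ℕ) := by
    push_cast; linarith [lowerGap_add_upperGap_le (N := N) ha hb]
  _ ≤ _ := by exact_mod_cast Int.le_natCast_sub _ _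

end Grid

section Hitting

variable {d N : ℕ}

theorem sub_pos_of_lt_prod {ε : ℝ} {a b : Fin d → ℝ} (hab : ∀ j, a j ≤ b j) (hε : 0 < ε)
    (hvol : ε < ∏ j, (b j - a j)) (j : Fin d) : 0 < b j - a j :=
  (sub_nonneg.2 (hab j)).lt_of_ne
    (prod_ne_zero_iff.1 (hε.trans hvol).ne' j (mem_univ j)).symm

theorem sum_gaps_le {ε : ℝ} {a b : Fin d → ℝ} (hab : ∀ j, 0 ≤ a j ∧ a j ≤ b j ∧ b j ≤ 1)
    (hε : 0 < ε) (hvol : ε < ∏ j, (b j - a j)) :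
    ∑ j, (lowerGap N (a j) + upperGap N (b j) : ℝ) ≤ (N + 1) * log ε⁻¹ := calc
  ∑ j, (lowerGap N (a j) + upperGap N (b j) : ℝ) ≤ ∑ j, (1 - (b j - a j)) * (N + 1) :=
    sum_le_sum fun j _ => lowerGap_add_upperGap_le (hab j).1 (hab j).2.2
  _ = (N + 1) * ∑ j, (1 - (b j - a j)) := by rw [mul_sum]; simp only [mul_comm]
  _ ≤ (N + 1) * log ε⁻¹ := by
    gcongr
    exact sum_one_sub_le_log_inv (sub_pos_of_lt_prod (fun j => (hab j).2.1) hε hvol) hε hvol.le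

theorem half_mul_pow_le_card_gridBox {ε : ℝ} {a b : Fin d → ℝ}
    (hab : ∀ j, 0 ≤ a j ∧ a j ≤ b j ∧ b j ≤ 1) (hε : 0 < ε) (hvol : ε < ∏ j, (b j - a j))
    (hN : 4 * log ε⁻¹ + 2 * logb 2 ε⁻¹ / ε ≤ N) :
    ε / 2 * N ^ d ≤ #(gridBox N (fun j => lowerGap N (a j)) fun j => upperGap N (b j)) := by
  have hL0 := sub_pos_of_lt_prod (fun j => (hab j).2.1) hε hvol
  have hL1 : ∀ j, b j - a j ≤ 1 := fun j => by linarith [hab j]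
  have hε1 : 1 < ε⁻¹ := one_lt_inv_iff₀.2
    ⟨hε, hvol.trans_le (prod_le_one (fun j _ => (hL0 j).le) fun j _ => hL1 j)⟩
  have hN0 : (0 : ℝ) < N := hN.trans_lt' <| by
    have hlog := log_pos hε1
    have hlogb := logb_pos one_lt_two hε1
    positivity
  set S := ∑ j, (1 - (b j - a j)) / (b j - a j)
  have hSN : S ≤ N / 2 := by
    linarith [sum_one_sub_div_le hL0 hL1 hε hvol.le, mul_div_assoc 2 (logb 2 ε⁻¹) ε]
  calc ε / 2 * N ^ d ≤ (1 - S / N) * (∏ j, (b j - a j)) * N ^ d := by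
        have : S / N ≤ 1 / 2 := by rw [div_le_iff₀ hN0]; linarith
        gcongr
        nlinarith
    _ ≤ ∏ j, ((N - (lowerGap N (a j) + upperGap N (b j)) : ℕ) : ℝ) := by
        simpa using one_sub_div_mul_le_prod hL0 hL1 hN0 (by linarith)
          fun j => mul_sub_one_le_sub_gaps (hab j).1 (hab j).2.2
    _ = _ := by rw [card_gridBox]; push_cast; rfl

/-- A word `c` of length `Λ` over `Option (Fin d × Bool)` encodes the gap vectors that count its
letters `some (j, false)` and `some (j, true)`; every pair of gap vectors of total size `≤ Λ`
arises this way, so there are at most `(2 d + 1) ^ Λ` grid boxes to hit. -/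
theorem exists_forall_exists_mem_gridBox {Λ n : ℕ} (hN : 0 < N) {δ : ℝ} (hδ : δ ≤ 1)
    (hunion : (2 * d + 1 : ℝ) ^ Λ * (1 - δ) ^ n < 1) :
    ∃ ω : Fin n → Fin d → Fin N, ∀ x y : Fin d → ℕ, ∑ j, (x j + y j) ≤ Λ →
      δ * N ^ d ≤ #(gridBox N x y) → ∃ i, ω i ∈ gridBox N x y := by
  have : Nonempty (Fin N) := ⟨⟨0, hN⟩⟩
  let decode : (Fin Λ → Option (Fin d × Bool)) → Finset (Fin d → Fin N) := fun c =>
    gridBox N (fun j => #{i | c i = some (j, false)}) fun j => #{i | c i = some (j, true)}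
  let 𝒮 := (univ.image decode).filter fun S => δ * N ^ d ≤ #S
  have h𝒮 : (#𝒮 : ℝ) ≤ (2 * d + 1) ^ Λ := by
    have : #𝒮 ≤ Fintype.card (Fin Λ → Option (Fin d × Bool)) :=
      (card_filter_le _ _).trans card_image_le
    simp only [Fintype.card_fun, Fintype.card_option, Fintype.card_prod, Fintype.card_fin,
      Fintype.card_bool] at this
    exact_mod_cast this.trans_eq (by ring)
  obtain ⟨ω, hω⟩ := exists_forall_exists_apply_mem 𝒮 (δ := δ) (n := n)
    (fun S hS => by simpa using (mem_filter.1 hS).2)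
    ((mul_le_mul_of_nonneg_right h𝒮 (pow_nonneg (by linarith) n)).trans_lt hunion)
  refine ⟨ω, fun x y hxy hdense => ?_⟩
  obtain ⟨c, hc⟩ := exists_fin_fiber_card_eq
    (fun jb : Fin d × Bool => if jb.2 then y jb.1 else x jb.1)
    (by simpa [Fintype.sum_prod_type, add_comm] using hxy)
  have hdecode : decode c = gridBox N x y := by simp only [decode, hc]; rfl
  exact hω _ (mem_filter.2 ⟨mem_image.2 ⟨c, mem_univ _, hdecode⟩, hdecode ▸ hdense⟩)

theorem prod_sub_le_of_forall_exists_mem_gridBox {Λ n : ℕ} {ε : ℝ} (hε : 0 < ε)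
    (hN : 4 * log ε⁻¹ + 2 * logb 2 ε⁻¹ / ε ≤ N) (hΛ : (N + 1) * log ε⁻¹ ≤ Λ)
    (ω : Fin n → Fin d → Fin N)
    (hω : ∀ x y : Fin d → ℕ, ∑ j, (x j + y j) ≤ Λ →
      ε / 2 * N ^ d ≤ #(gridBox N x y) → ∃ i, ω i ∈ gridBox N x y)
    {a b : Fin d → ℝ} (hab : ∀ j, 0 ≤ a j ∧ a j ≤ b j ∧ b j ≤ 1)
    (hempty : ∀ i, ∃ j, gridPoint N (ω i) j ∉ Set.Ioo (a j) (b j)) :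
    ∏ j, (b j - a j) ≤ ε := by
  by_contra! hvol
  obtain ⟨i, hi⟩ := hω _ _ (by exact_mod_cast (sum_gaps_le hab hε hvol).trans hΛ)
    (half_mul_pow_le_card_gridBox hab hε hvol hN)
  obtain ⟨j, hj⟩ := hempty i
  have hij := Fintype.mem_piFinset.1 hi j
  rw [mem_filter] at hij
  exact hj (gridPoint_mem_Ioo (hab j).2.2 hij.2.1 hij.2.2)

end Hitting

theorem log_le_logb_two {y : ℝ} (hy : 1 ≤ y) : log y ≤ logb 2 y :=
  le_div_self (log_nonneg hy) (log_pos one_lt_two) (by linarith [log_two_lt_d9])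

theorem log_two_mul_add_one_le {x : ℝ} (hx : 2 ≤ x) : log (2 * x + 1) ≤ 3 * logb 2 x := calc
  log (2 * x + 1) ≤ log (x ^ 3) :=
    log_le_log (by positivity) (by nlinarith [mul_le_mul_of_nonneg_left hx (sq_nonneg x)])
  _ = 3 * log x := by rw [log_pow]; norm_num
  _ ≤ 3 * logb 2 x := by gcongr; exact log_le_logb_two (by linarith)

theorem exists_grid_parameters {d : ℕ} (hd : 2 ≤ d) {ε : ℝ} (hε : 0 < ε) (hε' : ε < 1 / 2) :
    ∃ N Λ n : ℕ, 0 < N ∧ 4 * log ε⁻¹ + 2 * logb 2 ε⁻¹ / ε ≤ N ∧ (N + 1) * log ε⁻¹ ≤ Λ ∧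
      (2 * d + 1 : ℝ) ^ Λ * (1 - ε / 2) ^ n < 1 ∧
      (n : ℝ) ≤ 2 ^ 7 * logb 2 d * (1 + logb 2 ε⁻¹) ^ 2 / ε ^ 2 := by
  set Lb := logb 2 ε⁻¹
  set Lr := log ε⁻¹
  set ℓ := log (2 * d + 1)
  have hd' : (2 : ℝ) ≤ d := by exact_mod_cast hd
  have hε1 : 1 < ε⁻¹ := by rw [lt_inv_comm₀ one_pos hε]; linarith
  have hLr0 : 0 < Lr := log_pos hε1
  have hLrLb : Lr ≤ Lb := log_le_logb_two hε1.le
  have hNarg : 0 < 4 * Lr + 2 * Lb / ε := add_pos (by linarith) (div_pos (by linarith) hε)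
  have hLg : 1 ≤ logb 2 d := by
    rwa [le_logb_iff_rpow_le one_lt_two (by positivity), rpow_one]
  have hℓ : ℓ ≤ 3 * logb 2 d := log_two_mul_add_one_le hd'
  set N := ⌈4 * Lr + 2 * Lb / ε⌉₊
  set Λ := ⌈(N + 1) * Lr⌉₊
  set n := ⌊2 / ε * Λ * ℓ⌋₊ + 1
  have hN : (N : ℝ) ≤ 4 * Lr + 2 * Lb / ε + 1 := (Nat.ceil_lt_add_one hNarg.le).le
  have hΛ : (Λ : ℝ) ≤ (N + 1) * Lr + 1 := (Nat.ceil_lt_add_one (by positivity)).le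
  have hℓ0 : 0 < ℓ := log_pos (by linarith)
  have hn : 2 / ε * Λ * ℓ < n := by push_cast [n]; exact Nat.lt_floor_add_one _
  have hn' : (n : ℝ) ≤ 2 / ε * Λ * ℓ + 1 := by
    push_cast [n]; linarith [Nat.floor_le (show 0 ≤ 2 / ε * Λ * ℓ by positivity)]
  refine ⟨N, Λ, n, Nat.ceil_pos.2 hNarg, Nat.le_ceil _, Nat.le_ceil _, ?_, ?_⟩
  · refine pow_mul_one_sub_pow_lt_one (by positivity) (by linarith) ?_
    calc Λ * ℓ = ε / 2 * (2 / ε * Λ * ℓ) := by field_simp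
      _ < ε / 2 * n := by gcongr
  · have hεN : ε * (N + 1) ≤ 4 * Lb + 1 := by
      have : ε * (N + 1) ≤ 4 * ε * Lr + 2 * Lb + 2 * ε := calc
        ε * (N + 1) ≤ ε * (4 * Lr + 2 * Lb / ε + 2) :=
          mul_le_mul_of_nonneg_left (by linarith) hε.le
        _ = _ := by field_simp
      nlinarith
    have hεΛ : ε * Λ ≤ 4 * (1 + Lb) ^ 2 := by
      nlinarith [mul_le_mul_of_nonneg_right hεN hLr0.le, mul_le_mul_of_nonneg_left hΛ hε.le]
    rw [le_div_iff₀ (by positivity)]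
    calc n * ε ^ 2 ≤ (2 / ε * Λ * ℓ + 1) * ε ^ 2 := by gcongr
      _ = 2 * (ε * Λ) * ℓ + ε ^ 2 := by field_simp
      _ ≤ 2 * (4 * (1 + Lb) ^ 2) * (3 * logb 2 d) + 1 := by gcongr; nlinarith
      _ ≤ 2 ^ 7 * logb 2 d * (1 + Lb) ^ 2 := by nlinarith

/-- The Ullrich–Vybíral theorem: for `d ≥ 2` and `ε ∈ (0,1/2)` there is `P ⊆ [0,1]^d`
with `disp(P) ≤ ε` and `#P ≤ 2^7·log₂(d)·(1+log₂(ε⁻¹))²/ε²`. -/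
theorem stmt_17 (d : ℕ) (hd : 2 ≤ d) (ε : ℝ) (hε : 0 < ε) (hε' : ε < 1 / 2) :
    ∃ P : Finset (Fin d → ℝ),
      (∀ x ∈ P, ∀ j, x j ∈ Set.Icc (0 : ℝ) 1) ∧
      (P.card : ℝ) ≤ 2 ^ 7 * Real.logb 2 d * (1 + Real.logb 2 ε⁻¹) ^ 2 / ε ^ 2 ∧
      ∀ (a b : Fin d → ℝ) (I : Fin d → Set ℝ),
        (∀ j, 0 ≤ a j ∧ a j ≤ b j ∧ b j ≤ 1) →
        (∀ j, Set.Ioo (a j) (b j) ⊆ I j ∧ I j ⊆ Set.Icc (a j) (b j)) →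
        (∀ x ∈ P, ∃ j, x j ∉ I j) →
        ∏ j, (b j - a j) ≤ ε := by
  obtain ⟨N, Λ, n, hN0, hN, hΛ, hunion, hbudget⟩ := exists_grid_parameters hd hε hε'
  obtain ⟨ω, hω⟩ := exists_forall_exists_mem_gridBox hN0 (by linarith) hunion
  refine ⟨univ.image fun i => gridPoint N (ω i), ?_, ?_, ?_⟩
  · simp only [mem_image, mem_univ, true_and, forall_exists_index, forall_apply_eq_imp_iff]
    exact fun i => gridPoint_mem_Icc (ω i)
  · calc (#(univ.image fun i => gridPoint N (ω i)) : ℝ) ≤ n := by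
          exact_mod_cast card_image_le.trans_eq (card_fin n)
      _ ≤ _ := hbudget
  · intro a b I hab hI hP
    refine prod_sub_le_of_forall_exists_mem_gridBox hε hN hΛ ω hω hab fun i => ?_
    obtain ⟨j, hj⟩ := hP _ (mem_image_of_mem _ (mem_univ i))
    exact ⟨j, fun h => hj ((hI j).1 h)⟩
end

section
/- Fix m ≥ 2 and d ≥ 2^m, and let C be the collection of sets C_m(s,p) = C_m(s,p)' - 1 where C_m(s,p)' = 2^m·(B_m(s,p) ∩ M_m^d) for pairs (s,p) ∈ I_m with s_j = 2^m - 1 for all j > A_m. Then: (i) C is invariant under permutations of the first A_m coordinates it depends on, (ii) #C ≤ 2^{2m·A_m}, and (iii) every C ∈ C satisfies #C ≥ 2^{-m-4}·(2^m - 1)^{A_m}. -/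
/-- `Ω_m(s,p)` is nonempty. -/
def OmegaNonempty (m d : ℕ) (s : Fin d → ℕ) (p : Fin d → ℝ) : Prop :=
  ∃ a b : Fin d → ℝ,
    (∀ ℓ, 0 ≤ a ℓ ∧ a ℓ ≤ b ℓ ∧ b ℓ ≤ 1) ∧
    ((2 : ℝ) ^ m)⁻¹ < ∏ ℓ, (b ℓ - a ℓ) ∧
    ∀ ℓ, (s ℓ : ℝ) / 2 ^ m < b ℓ - a ℓ ∧ b ℓ - a ℓ ≤ ((s ℓ : ℝ) + 1) / 2 ^ m ∧
      p ℓ - ((2 : ℝ) ^ m)⁻¹ ≤ a ℓ ∧ a ℓ < p ℓ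

/-- The restriction set `C_m(s,p) = 2^m·(B_m(s,p) ∩ M_m^{A_m}) - 1`, living on the first
`A_m` coordinates: `w ∈ {0,…,2^m-2}^{A_m}` belongs to it iff for every `ℓ` the grid point
`(w_ℓ+1)/2^m ∈ M_m` lies in `[p_ℓ, p_ℓ + (s_ℓ-1)/2^m]`. -/
noncomputable def restrSet (m Am : ℕ) (s : Fin Am → ℕ) (p : Fin Am → ℝ) :
    Finset (Fin Am → Fin (2 ^ m - 1)) :=
  @Finset.filter _
    (fun w => ∀ ℓ, p ℓ ≤ (((w ℓ : ℕ) : ℝ) + 1) / 2 ^ m ∧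
      (((w ℓ : ℕ) : ℝ) + 1) / 2 ^ m ≤ p ℓ + ((s ℓ : ℝ) - 1) / 2 ^ m)
    (Classical.decPred _) Finset.univ

/-- The collection `𝒞` of restriction sets `C_m(s,p)` for `(s,p) ∈ 𝕀_m` with
`s_j = 2^m - 1` for all `j > A_m`. -/
def Coll (m d Am : ℕ) (h : Am ≤ d) : Set (Finset (Fin Am → Fin (2 ^ m - 1))) :=
  {C | ∃ (s : Fin d → ℕ) (p : Fin d → ℝ),
    (∀ ℓ, s ℓ ≤ 2 ^ m - 1) ∧ (∀ ℓ, p ℓ ∈ Mgrid m) ∧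
    OmegaNonempty m d s p ∧
    (∀ j : Fin d, Am ≤ (j : ℕ) → s j = 2 ^ m - 1) ∧
    C = restrSet m Am (fun i => s (Fin.castLE h i)) (fun i => p (Fin.castLE h i))}


open Finset Real

section Restriction

lemma restrSet_image_comp_perm (m n : ℕ) (s : Fin n → ℕ) (p : Fin n → ℝ)
    (σ : Equiv.Perm (Fin n)) :
    (restrSet m n s p).image (fun w => w ∘ σ) = restrSet m n (s ∘ σ) (p ∘ σ) := by
  ext v
  simp only [restrSet, mem_image, mem_filter, mem_univ, true_and, Function.comp_apply]
  constructor
  · rintro ⟨w, hw, rfl⟩ ℓ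
    exact hw (σ ℓ)
  · intro hv
    refine ⟨v ∘ σ.symm, fun ℓ => ?_, by ext; simp⟩
    simpa using hv (σ.symm ℓ)

lemma grid_le_iff_mem_Ico {m j s w : ℕ} (hj : 1 ≤ j) (hs : 1 ≤ s) :
    ((j : ℝ) / 2 ^ m ≤ ((w : ℝ) + 1) / 2 ^ m ∧
        ((w : ℝ) + 1) / 2 ^ m ≤ j / 2 ^ m + ((s : ℝ) - 1) / 2 ^ m) ↔
      w ∈ Ico (j - 1) (j - 1 + s) := by
  have hN : (0 : ℝ) < 2 ^ m := by positivity
  rw [← add_div, div_le_div_iff_of_pos_right hN, div_le_div_iff_of_pos_right hN,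
    mem_Ico, ← Nat.cast_one, ← Nat.cast_add, ← Nat.cast_sub hs, ← Nat.cast_add,
    Nat.cast_le, Nat.cast_le]
  omega

lemma card_restrSet_grid {m n : ℕ} {s j : Fin n → ℕ} (hj : ∀ i, 1 ≤ j i)
    (hs : ∀ i, 1 ≤ s i) (hjs : ∀ i, j i + s i ≤ 2 ^ m) :
    #(restrSet m n s fun i => (j i : ℝ) / 2 ^ m) = ∏ i, s i := by
  have hlt : ∀ i, ∀ w ∈ Ico (j i - 1) (j i - 1 + s i), w < 2 ^ m - 1 := fun i w hw => by
    have := hj i; have := hjs i; have := mem_Ico.1 hw; omega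
  have hpi : restrSet m n s (fun i => (j i : ℝ) / 2 ^ m) =
      Fintype.piFinset fun i => (Ico (j i - 1) (j i - 1 + s i)).attachFin (hlt i) := by
    ext w
    simp [restrSet, Fintype.mem_piFinset, mem_attachFin, grid_le_iff_mem_Ico (hj _) (hs _)]
  rw [hpi, Fintype.card_piFinset]
  exact prod_congr rfl fun i _ => by rw [card_attachFin, Nat.card_Ico]; omega

end Restriction

section Omega

variable {m d : ℕ} {s : Fin d → ℕ} {p : Fin d → ℝ}

lemma OmegaNonempty.comp_perm (hΩ : OmegaNonempty m d s p) (τ : Equiv.Perm (Fin d)) :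
    OmegaNonempty m d (s ∘ τ) (p ∘ τ) := by
  obtain ⟨a, b, hab, hprod, hcond⟩ := hΩ
  refine ⟨a ∘ τ, b ∘ τ, fun ℓ => hab _, ?_, fun ℓ => hcond _⟩
  simpa only [Function.comp_apply, Equiv.prod_comp τ fun ℓ => b ℓ - a ℓ] using hprod

lemma OmegaNonempty.inv_lt_prod (hΩ : OmegaNonempty m d s p) :
    ((2 : ℝ) ^ m)⁻¹ < ∏ ℓ, ((s ℓ : ℝ) + 1) / 2 ^ m := by
  obtain ⟨a, b, hab, hprod, hcond⟩ := hΩ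
  exact hprod.trans_le <| prod_le_prod (fun ℓ _ => sub_nonneg.2 (hab ℓ).2.1)
    fun ℓ _ => (hcond ℓ).2.1

lemma OmegaNonempty.add_le {j : Fin d → ℕ} (hΩ : OmegaNonempty m d s p)
    (hp : ∀ ℓ, p ℓ = j ℓ / 2 ^ m) (ℓ : Fin d) : j ℓ + s ℓ ≤ 2 ^ m := by
  obtain ⟨a, b, hab, -, hcond⟩ := hΩ
  obtain ⟨hsba, -, hpa, -⟩ := hcond ℓ
  have hsum : (s ℓ : ℝ) / 2 ^ m + j ℓ / 2 ^ m < 1 + (2 ^ m)⁻¹ := by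
    rw [hp ℓ] at hpa; linarith [(hab ℓ).2.2]
  have : ((s ℓ + j ℓ : ℕ) : ℝ) < ((2 ^ m + 1 : ℕ) : ℝ) :=
    calc ((s ℓ + j ℓ : ℕ) : ℝ) = ((s ℓ : ℝ) / 2 ^ m + j ℓ / 2 ^ m) * 2 ^ m := by
          push_cast; field_simp
      _ < (1 + (2 ^ m)⁻¹) * 2 ^ m := by gcongr
      _ = ((2 ^ m + 1 : ℕ) : ℝ) := by push_cast; field_simp
  have := Nat.cast_lt.1 this
  omega

end Omega

lemma add_one_pow_mul_sub_one_pow_le_of_le_four_mul {s N : ℝ} {m : ℕ} (hs : 0 < s)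
    (hsN : s + 1 ≤ N) (hms : (m : ℝ) ≤ 4 * s) :
    (s + 1) ^ (m + 4) * (N - 1) ^ m ≤ s ^ m * N ^ (m + 4) := by
  set t := N - 1 - s
  have hN : 0 < N := by linarith
  have ht : 0 ≤ t := by linarith
  have hfirst : ((s + 1) * (N - 1)) ^ m ≤ (s * N) ^ m * exp (4 * (t / N)) := by
    have hfac : (s + 1) * (N - 1) = s * N * (t / (s * N) + 1) := by
      field_simp; ring
    have hexp : (m : ℝ) * (t / (s * N)) ≤ 4 * (t / N) := by
      calc (m : ℝ) * (t / (s * N)) = m / s * (t / N) := by field_simp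
        _ ≤ 4 * (t / N) := by gcongr; rw [div_le_iff₀ hs]; linarith
    calc ((s + 1) * (N - 1)) ^ m = (s * N) ^ m * (t / (s * N) + 1) ^ m := by rw [hfac, mul_pow]
      _ ≤ (s * N) ^ m * exp (t / (s * N)) ^ m := by
          gcongr
          exact add_one_le_exp _
      _ = (s * N) ^ m * exp (m * (t / (s * N))) := by rw [exp_nat_mul]
      _ ≤ (s * N) ^ m * exp (4 * (t / N)) := by gcongr
  have hsecond : (s + 1) ^ 4 * exp (4 * (t / N)) ≤ N ^ 4 := by
    have h1 : (s + 1) * exp (t / N) ≤ N := by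
      have hsN' : s + 1 = N * (-(t / N) + 1) := by field_simp; ring
      calc (s + 1) * exp (t / N) = N * ((-(t / N) + 1) * exp (t / N)) := by rw [hsN', mul_assoc]
        _ ≤ N * (exp (-(t / N)) * exp (t / N)) := by gcongr; exact add_one_le_exp _
        _ = N := by rw [← exp_add]; simp
    calc (s + 1) ^ 4 * exp (4 * (t / N)) = ((s + 1) * exp (t / N)) ^ 4 := by
          rw [mul_pow, ← exp_nat_mul]; norm_num
      _ ≤ N ^ 4 := by gcongr
  calc (s + 1) ^ (m + 4) * (N - 1) ^ m = ((s + 1) * (N - 1)) ^ m * (s + 1) ^ 4 := by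
        rw [pow_add, mul_pow]; ring
    _ ≤ (s * N) ^ m * exp (4 * (t / N)) * (s + 1) ^ 4 := by gcongr
    _ = (s * N) ^ m * ((s + 1) ^ 4 * exp (4 * (t / N))) := by ring
    _ ≤ (s * N) ^ m * N ^ 4 := by gcongr
    _ = s ^ m * N ^ (m + 4) := by ring

lemma add_one_pow_le_of_four_mul_le {s m : ℕ} (hs : 1 ≤ s) (hsm : 4 * s ≤ m) :
    (s + 1) ^ (m + 4) ≤ s ^ m * 16 ^ m := by
  have h4 : (s + 1) ^ 4 ≤ 2 ^ m :=
    calc (s + 1) ^ 4 ≤ (2 ^ s) ^ 4 := by gcongr; exact Nat.lt_two_pow_self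
      _ = 2 ^ (4 * s) := by ring
      _ ≤ 2 ^ m := Nat.pow_le_pow_right two_pos hsm
  calc (s + 1) ^ (m + 4) = (s + 1) ^ m * (s + 1) ^ 4 := pow_add _ _ _
    _ ≤ (2 * s) ^ m * 2 ^ m := by gcongr; omega
    _ ≤ s ^ m * 16 ^ m := by
      rw [mul_pow, mul_right_comm, mul_comm, ← mul_pow]
      gcongr; norm_num

lemma add_one_div_two_pow_pow_le (m s : ℕ) (hs : 1 ≤ s) (hsN : s + 1 ≤ 2 ^ m) :
    (((s : ℝ) + 1) / 2 ^ m) ^ (m + 4) ≤ ((s : ℝ) / (2 ^ m - 1)) ^ m := by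
  have hN1 : (1 : ℝ) < 2 ^ m := by exact_mod_cast (show 1 < 2 ^ m by omega)
  rw [div_pow, div_pow,
    div_le_div_iff₀ (by positivity) (by simpa using pow_pos (sub_pos.2 hN1) m)]
  rcases le_total m (4 * s) with hms | hsm
  · exact add_one_pow_mul_sub_one_pow_le_of_le_four_mul (by exact_mod_cast hs)
      (by exact_mod_cast hsN) (by exact_mod_cast hms)
  · have key : ((s : ℝ) + 1) ^ (m + 4) ≤ (s : ℝ) ^ m * 16 ^ m := by
      exact_mod_cast add_one_pow_le_of_four_mul_le hs hsm
    calc ((s : ℝ) + 1) ^ (m + 4) * (2 ^ m - 1) ^ m ≤ (s : ℝ) ^ m * 16 ^ m * (2 ^ m) ^ m := by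
          gcongr
          linarith
      _ = (s : ℝ) ^ m * (2 ^ m) ^ (m + 4) := by
          rw [show (16 : ℝ) ^ m = (2 ^ m) ^ 4 by rw [← pow_mul, mul_comm, pow_mul]; norm_num]
          ring

lemma prod_le_of_nonneg_of_le_one {ι : Type*} [Fintype ι] {f : ι → ℝ} (h0 : ∀ i, 0 ≤ f i)
    (h1 : ∀ i, f i ≤ 1) (i : ι) : ∏ j, f j ≤ f i := by
  classical
  rw [← mul_prod_erase univ f (mem_univ i)]
  exact mul_le_of_le_one_right (h0 i) (prod_le_one (fun j _ => h0 j) fun j _ => h1 j)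

lemma inv_two_pow_mul_le_prod {ι : Type*} [Fintype ι] {m : ℕ} (hm : m ≠ 0) {s : ι → ℕ}
    (hs : ∀ i, 1 ≤ s i) (hsN : ∀ i, s i + 1 ≤ 2 ^ m)
    (hprod : ((2 : ℝ) ^ m)⁻¹ < ∏ i, ((s i : ℝ) + 1) / 2 ^ m) :
    ((2 : ℝ) ^ (m + 4))⁻¹ * ((2 : ℝ) ^ m - 1) ^ Fintype.card ι ≤ ∏ i, (s i : ℝ) := by
  have hN1 : (0 : ℝ) < 2 ^ m - 1 := by
    have : (1 : ℝ) < 2 ^ m := one_lt_pow₀ one_lt_two hm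
    linarith
  have hpow : ((2 : ℝ) ^ (m + 4))⁻¹ ^ m ≤ (∏ i, (s i : ℝ) / (2 ^ m - 1)) ^ m :=
    calc ((2 : ℝ) ^ (m + 4))⁻¹ ^ m = ((2 : ℝ) ^ m)⁻¹ ^ (m + 4) := by
          rw [inv_pow, inv_pow, ← pow_mul, ← pow_mul, mul_comm]
      _ ≤ (∏ i, ((s i : ℝ) + 1) / 2 ^ m) ^ (m + 4) := by gcongr
      _ = ∏ i, (((s i : ℝ) + 1) / 2 ^ m) ^ (m + 4) := (prod_pow _ _ _).symm
      _ ≤ ∏ i, ((s i : ℝ) / (2 ^ m - 1)) ^ m :=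
          prod_le_prod (fun _ _ => by positivity) fun i _ =>
            add_one_div_two_pow_pow_le m (s i) (hs i) (hsN i)
      _ = (∏ i, (s i : ℝ) / (2 ^ m - 1)) ^ m := prod_pow _ _ _
  have := le_of_pow_le_pow_left₀ hm (by positivity) hpow
  rwa [prod_div_distrib, prod_const, card_univ, le_div_iff₀ (by positivity)] at this

section Coll

variable {m d Am : ℕ} {h : Am ≤ d}

lemma image_comp_perm_mem_Coll {C : Finset (Fin Am → Fin (2 ^ m - 1))} (hC : C ∈ Coll m d Am h)
    (σ : Equiv.Perm (Fin Am)) : C.image (fun w => w ∘ σ) ∈ Coll m d Am h := by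
  obtain ⟨s, p, hs, hp, hΩ, hfull, rfl⟩ := hC
  set τ := σ.viaFintypeEmbedding (Fin.castLEEmb h)
  have hτ : ∀ i, τ (Fin.castLE h i) = Fin.castLE h (σ i) :=
    σ.viaFintypeEmbedding_apply_image (Fin.castLEEmb h)
  refine ⟨s ∘ τ, p ∘ τ, fun ℓ => hs _, fun ℓ => hp _, hΩ.comp_perm τ,
    fun ℓ hℓ => ?_, ?_⟩
  · rw [Function.comp_apply, σ.viaFintypeEmbedding_apply_notMem_range, hfull ℓ hℓ]
    rintro ⟨i, rfl⟩
    simp only [Fin.castLEEmb_apply, Fin.val_castLE] at hℓ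
    exact i.isLt.not_ge hℓ
  · rw [restrSet_image_comp_perm]
    simp only [Function.comp_def, hτ]

lemma ncard_Coll_le : (Coll m d Am h).ncard ≤ 2 ^ (2 * m * Am) := by
  set g : (Fin Am → Fin (2 ^ m)) × (Fin Am → Fin (2 ^ m)) →
      Finset (Fin Am → Fin (2 ^ m - 1)) :=
    fun sj => restrSet m Am (fun i => sj.1 i) fun i => ((sj.2 i : ℕ) : ℝ) / 2 ^ m
  have hsub : Coll m d Am h ⊆ Set.range g := by
    rintro _ ⟨s, p, hs, hp, -, -, rfl⟩
    choose j hj1 hjN hpj using hp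
    have hN := Nat.one_le_two_pow (n := m)
    refine ⟨(fun i => ⟨s (Fin.castLE h i), by have := hs (Fin.castLE h i); omega⟩,
      fun i => ⟨j (Fin.castLE h i), by have := hjN (Fin.castLE h i); omega⟩), ?_⟩
    simp [g, hpj]
  calc (Coll m d Am h).ncard ≤ (Set.range g).ncard := Set.ncard_le_ncard hsub (Set.finite_range g)
    _ ≤ Nat.card ((Fin Am → Fin (2 ^ m)) × (Fin Am → Fin (2 ^ m))) := by
      rw [← Nat.card_coe_set_eq]; exact Finite.card_range_le g
    _ = 2 ^ (2 * m * Am) := by simp [← pow_mul, ← pow_add]; ring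

lemma inv_two_pow_mul_le_card_of_mem_Coll (hm : m ≠ 0)
    {C : Finset (Fin Am → Fin (2 ^ m - 1))} (hC : C ∈ Coll m d Am h) :
    ((2 : ℝ) ^ (m + 4))⁻¹ * ((2 : ℝ) ^ m - 1) ^ Am ≤ (#C : ℝ) := by
  obtain ⟨s, p, hs, hp, hΩ, hfull, rfl⟩ := hC
  choose j hj1 _ hpj using hp
  have hN := Nat.one_le_two_pow (n := m)
  have hprod := hΩ.inv_lt_prod
  have hsN : ∀ ℓ, s ℓ + 1 ≤ 2 ^ m := fun ℓ => by have := hs ℓ; omega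
  have hs1 : ∀ ℓ, 1 ≤ s ℓ := fun ℓ => by
    have hfac := hprod.trans_le <| prod_le_of_nonneg_of_le_one (fun _ => by positivity)
      (fun ℓ => div_le_one_of_le₀ (by exact_mod_cast hsN ℓ) (by positivity)) ℓ
    rw [inv_eq_one_div, div_lt_div_iff_of_pos_right (by positivity)] at hfac
    exact_mod_cast (lt_add_iff_pos_left 1).1 hfac
  have hrestrict : ∏ ℓ, ((s ℓ : ℝ) + 1) / 2 ^ m =
      ∏ i : Fin Am, ((s (Fin.castLE h i) : ℝ) + 1) / 2 ^ m := by
    refine (Fintype.prod_of_injective _ (Fin.castLE_injective h) _ _ (fun ℓ hℓ => ?_)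
      fun _ => rfl).symm
    have hAm : Am ≤ (ℓ : ℕ) := by
      by_contra! hlt
      exact hℓ ⟨⟨ℓ, hlt⟩, rfl⟩
    rw [hfull ℓ hAm, Nat.cast_sub hN]
    field_simp
    simp
  rw [hrestrict] at hprod
  obtain rfl : p = fun ℓ => (j ℓ : ℝ) / 2 ^ m := funext hpj
  rw [card_restrSet_grid (fun _ => hj1 _) (fun _ => hs1 _) fun _ => hΩ.add_le hpj _]
  push_cast
  simpa only [Fintype.card_fin] using
    inv_two_pow_mul_le_prod hm (fun _ => hs1 _) (fun _ => hsN _) hprod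

end Coll

theorem stmt_19_general (m d Am : ℕ) (hm : 2 ≤ m) (h : Am ≤ d) :
    (∀ C ∈ Coll m d Am h, ∀ σ : Equiv.Perm (Fin Am),
        C.image (fun w => w ∘ σ) ∈ Coll m d Am h) ∧
      Set.ncard (Coll m d Am h) ≤ 2 ^ (2 * m * Am) ∧
      ∀ C ∈ Coll m d Am h,
        ((2 : ℝ) ^ (m + 4))⁻¹ * ((2 : ℝ) ^ m - 1) ^ Am ≤ (C.card : ℝ) :=
  ⟨fun _ hC σ => image_comp_perm_mem_Coll hC σ, ncard_Coll_le,
    fun _ => inv_two_pow_mul_le_card_of_mem_Coll (by omega)⟩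

/-- For `m ≥ 2` and `d ≥ 2^m`, with `A_m = min(m·2^m, d)`, the collection `𝒞`:
(i) is invariant under permutations of the `A_m` coordinates,
(ii) has cardinality at most `2^{2m·A_m}`, and
(iii) each of its members `C` satisfies `#C ≥ 2^{-m-4}·(2^m-1)^{A_m}`. -/
theorem stmt_19 (m d Am : ℕ) (hm : 2 ≤ m) (hd : 2 ^ m ≤ d)
    (hAm : Am = min (m * 2 ^ m) d) (h : Am ≤ d) :
    (∀ C ∈ Coll m d Am h, ∀ σ : Equiv.Perm (Fin Am),
        C.image (fun w => w ∘ σ) ∈ Coll m d Am h) ∧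
      Set.ncard (Coll m d Am h) ≤ 2 ^ (2 * m * Am) ∧
      ∀ C ∈ Coll m d Am h,
        ((2 : ℝ) ^ (m + 4))⁻¹ * ((2 : ℝ) ^ m - 1) ^ Am ≤ (C.card : ℝ) :=
  stmt_19_general m d Am hm h
end
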